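/- arXiv:2312.02709 — 4 statements merged into one kernel-verified Lean document; each statement's English description precedes it below -/
import Mathlib

section
/- Let μ be a Borel probability measure on a real Banach space, and let A be a closed, symmetric, convex set with μ(A) > 0 and μ(∂A) = 0. Then there exists ε > 0 such that the ball B(0, ε) is contained in A. -/
open MeasureTheory

/-! Since `closure A = interior A ∪ ∂A` and `μ(∂A) = 0`, the interior of `A` has positive measure,
so it contains some point `x`. By symmetry `-x ∈ A`, and by convexity the midpoint `0` of `x` and
`-x` lies in the interior of `A`. -/

theorem nonempty_interior_of_measure_frontier_eq_zero {X : Type*} [TopologicalSpace X]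
    [MeasurableSpace X] {μ : Measure X} {s : Set X} (hs : μ s ≠ 0) (hfr : μ (frontier s) = 0) :
    (interior s).Nonempty := by
  refine nonempty_of_measure_ne_zero (μ := μ) fun hint => hs (measure_mono_null subset_closure ?_)
  rw [closure_eq_interior_union_frontier]
  exact measure_union_null hint hfr

theorem Convex.zero_mem_interior_of_eq_neg {E : Type*} [AddCommGroup E] [Module ℝ E]
    [TopologicalSpace E] [IsTopologicalAddGroup E] [ContinuousSMul ℝ E] {s : Set E}
    (hconv : Convex ℝ s) (hsym : s = -s) (hint : (interior s).Nonempty) : 0 ∈ interior s := by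
  obtain ⟨x, hx⟩ := hint
  have hnx : -x ∈ s := by
    rw [hsym, Set.mem_neg, neg_neg]
    exact interior_subset hx
  simpa using hconv.combo_interior_self_mem_interior hx hnx
    (by norm_num : (0 : ℝ) < 1 / 2) (by norm_num : (0 : ℝ) ≤ 1 / 2) (by norm_num)

theorem stmt_2_general {Ω : Type*} [NormedAddCommGroup Ω] [NormedSpace ℝ Ω]
    [MeasurableSpace Ω]
    (μ : Measure Ω)
    (A : Set Ω) (hconv : Convex ℝ A) (hsym : A = -A)
    (hpos : 0 < μ A) (hbd : μ (frontier A) = 0) :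
    ∃ ε > 0, Metric.ball (0 : Ω) ε ⊆ A := by
  have h0 : (0 : Ω) ∈ interior A :=
    hconv.zero_mem_interior_of_eq_neg hsym
      (nonempty_interior_of_measure_frontier_eq_zero hpos.ne' hbd)
  exact Metric.mem_nhds_iff.1 (mem_interior_iff_mem_nhds.1 h0)

/-- If `μ` is a Borel probability measure on a real Banach space and `A`
is a closed, symmetric, convex set with `μ(A) > 0` and `μ(∂A) = 0`, then there is
`ε > 0` with `B(0, ε) ⊆ A`. -/
theorem stmt_2 {Ω : Type*} [NormedAddCommGroup Ω] [NormedSpace ℝ Ω] [CompleteSpace Ω]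
    [MeasurableSpace Ω] [BorelSpace Ω]
    (μ : Measure Ω) [IsProbabilityMeasure μ]
    (A : Set Ω) (hclosed : IsClosed A) (hconv : Convex ℝ A) (hsym : A = -A)
    (hpos : 0 < μ A) (hbd : μ (frontier A) = 0) :
    ∃ ε > 0, Metric.ball (0 : Ω) ε ⊆ A :=
  stmt_2_general μ A hconv hsym hpos hbd
end

section
/- Let (ν_n) and (μ_n) be sequences of Borel probability measures on a separable real Banach space such that ν_n(K) ≥ μ_n(K) for every convex symmetric set K and every n, and suppose μ_n converges weakly to some probability measure μ. Then the sequence (ν_n) is tight. -/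
/-!
A weakly convergent sequence of probability measures on a Polish space is tight, since together
with its limit it forms a compact set of measures. Every compact set `K` lies in a compact convex
symmetric set `L` (the closed convex hull of `K ∪ -K`), and `μₙ L ≤ νₙ L` gives
`νₙ Lᶜ ≤ μₙ Lᶜ ≤ μₙ Kᶜ`.
-/

open MeasureTheory Filter Set Topology

lemma IsCompact.exists_isCompact_convex_neg_eq_superset {E : Type*} [NormedAddCommGroup E]
    [NormedSpace ℝ E] [CompleteSpace E] {s : Set E} (hs : IsCompact s) :
    ∃ L : Set E, IsCompact L ∧ Convex ℝ L ∧ L = -L ∧ s ⊆ L := by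
  refine ⟨closure (convexHull ℝ (s ∪ -s)), ?_, (convex_convexHull ℝ _).closure, ?_,
    subset_union_left.trans ((subset_convexHull ℝ _).trans subset_closure)⟩
  · exact (totallyBounded_convexHull.mpr (hs.union hs.neg).totallyBounded).closure
      |>.isCompact_of_isClosed isClosed_closure
  · rw [neg_closure, ← convexHull_neg, union_neg, neg_neg, union_comm]

lemma isTightMeasureSet_range_of_tendsto {X : Type*} [PseudoMetricSpace X] [CompleteSpace X]
    [SecondCountableTopology X] [MeasurableSpace X] [OpensMeasurableSpace X]
    {μs : ℕ → ProbabilityMeasure X} {μ : ProbabilityMeasure X} (h : Tendsto μs atTop (𝓝 μ)) :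
    IsTightMeasureSet (range fun n ↦ (μs n : Measure X)) := by
  have hcomp : IsCompact (closure (range μs)) :=
    h.isCompact_insert_range.closure_of_subset (subset_insert _ _)
  convert isTightMeasureSet_of_isCompact_closure hcomp using 1
  ext ν
  simp

lemma measure_compl_le_of_le {X : Type*} [MeasurableSpace X] {μ ν : Measure X}
    [IsProbabilityMeasure μ] [IsProbabilityMeasure ν] {s : Set X} (hs : MeasurableSet s)
    (h : μ s ≤ ν s) : ν sᶜ ≤ μ sᶜ := by
  rw [prob_compl_eq_one_sub hs, prob_compl_eq_one_sub hs]
  exact tsub_le_tsub_left h 1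

lemma isTightMeasureSet_range_of_forall_convex_neg_eq_le {ι E : Type*} [NormedAddCommGroup E]
    [NormedSpace ℝ E] [CompleteSpace E] [MeasurableSpace E] [OpensMeasurableSpace E]
    {μ ν : ι → Measure E} [∀ i, IsProbabilityMeasure (μ i)] [∀ i, IsProbabilityMeasure (ν i)]
    (hμ : IsTightMeasureSet (range μ))
    (hle : ∀ i K, IsCompact K → Convex ℝ K → K = -K → μ i K ≤ ν i K) :
    IsTightMeasureSet (range ν) := by
  rw [isTightMeasureSet_iff_exists_isCompact_measure_compl_le] at hμ ⊢
  intro ε hε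
  obtain ⟨K, hK, hμK⟩ := hμ ε hε
  obtain ⟨L, hL, hLconv, hLneg, hKL⟩ := hK.exists_isCompact_convex_neg_eq_superset
  refine ⟨L, hL, forall_mem_range.mpr fun i ↦ ?_⟩
  calc ν i Lᶜ
      ≤ μ i Lᶜ := measure_compl_le_of_le hL.isClosed.measurableSet (hle i L hL hLconv hLneg)
    _ ≤ μ i Kᶜ := measure_mono (compl_subset_compl.mpr hKL)
    _ ≤ ε := hμK _ (mem_range_self i)

/-- If `(ν n)` and `(μ n)` are Borel probability measures on a separable
real Banach space with `ν n K ≥ μ n K` for every convex symmetric set `K`, and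
`μ n → μ` weakly, then the family `(ν n)` is tight. -/
theorem stmt_4 {Ω : Type*} [NormedAddCommGroup Ω] [NormedSpace ℝ Ω] [CompleteSpace Ω]
    [TopologicalSpace.SeparableSpace Ω] [MeasurableSpace Ω] [BorelSpace Ω]
    (ν μseq : ℕ → Measure Ω) (μ : Measure Ω)
    [∀ n, IsProbabilityMeasure (ν n)] [∀ n, IsProbabilityMeasure (μseq n)]
    [IsProbabilityMeasure μ]
    (hdom : ∀ n, ∀ K : Set Ω, Convex ℝ K → K = -K → μseq n K ≤ ν n K)
    (hweak : ∀ f : BoundedContinuousFunction Ω ℝ,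
      Tendsto (fun n => ∫ x, f x ∂(μseq n)) atTop (nhds (∫ x, f x ∂μ))) :
    ∀ δ : ℝ, 0 < δ → ∃ K : Set Ω, IsCompact K ∧ ∀ n, ν n Kᶜ ≤ ENNReal.ofReal δ := by
  intro δ hδ
  let P : ℕ → ProbabilityMeasure Ω := fun n ↦ ⟨μseq n, inferInstance⟩
  have hP : Tendsto P atTop (𝓝 ⟨μ, inferInstance⟩) :=
    ProbabilityMeasure.tendsto_iff_forall_integral_tendsto.mpr hweak
  have hν : IsTightMeasureSet (range ν) :=
    isTightMeasureSet_range_of_forall_convex_neg_eq_le (isTightMeasureSet_range_of_tendsto hP)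
      fun n K _ ↦ hdom n K
  obtain ⟨K, hK, hνK⟩ := isTightMeasureSet_iff_exists_isCompact_measure_compl_le.mp hν _
    (ENNReal.ofReal_pos.mpr hδ)
  exact ⟨K, hK, fun n ↦ hνK _ (mem_range_self n)⟩
end

section
/- Under the same hypotheses (μ centered Gaussian on a separable Banach space satisfying the functional Gaussian correlation inequality, ν a probability measure with dν/dμ symmetric quasi-concave and nonnegative), for every nonnegative, symmetric, convex function g : Ω → ℝ≥0 with ν(g) < ∞, one has μ(g) ≥ ν(g). -/
open MeasureTheory

/-- Under the same hypotheses as Statement 6 (μ centered Gaussian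
satisfying the functional GCI, ν with nonnegative symmetric quasi-concave density),
for every nonnegative, symmetric, convex function `g` with `ν(g) < ∞` one has
`μ(g) ≥ ν(g)`. -/
theorem stmt_7 {Ω : Type*} [NormedAddCommGroup Ω] [NormedSpace ℝ Ω] [CompleteSpace Ω]
    [TopologicalSpace.SeparableSpace Ω] [MeasurableSpace Ω] [BorelSpace Ω]
    (μ ν : Measure Ω) [IsProbabilityMeasure μ] [IsProbabilityMeasure ν]
    (hcentered : μ.map (fun x => -x) = μ)
    (hGCI : ∀ f h : Ω → ℝ, Measurable f → Measurable h →
      (∀ x, 0 ≤ f x) → (∀ x, 0 ≤ h x) →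
      (∀ x, f (-x) = f x) → (∀ x, h (-x) = h x) →
      (∀ r : ℝ, Convex ℝ {x | r ≤ f x}) → (∀ r : ℝ, Convex ℝ {x | r ≤ h x}) →
      (∫⁻ x, ENNReal.ofReal (f x) ∂μ) * (∫⁻ x, ENNReal.ofReal (h x) ∂μ) ≤
        ∫⁻ x, ENNReal.ofReal (f x * h x) ∂μ)
    (ρ : Ω → ℝ) (hρmeas : Measurable ρ) (hρ0 : ∀ x, 0 ≤ ρ x)
    (hρsym : ∀ x, ρ (-x) = ρ x) (hρqc : ∀ r : ℝ, Convex ℝ {x | r ≤ ρ x})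
    (hν : ν = μ.withDensity (fun x => ENNReal.ofReal (ρ x)))
    (g : Ω → ℝ) (hgmeas : Measurable g) (hg0 : ∀ x, 0 ≤ g x)
    (hgsym : ∀ x, g (-x) = g x) (hgconv : ConvexOn ℝ Set.univ g)
    (hgfin : ∫⁻ x, ENNReal.ofReal (g x) ∂ν < ⊤) :
    ∫⁻ x, ENNReal.ofReal (g x) ∂ν ≤ ∫⁻ x, ENNReal.ofReal (g x) ∂μ := by
  -- density has total mass 1
  have hρdens : ∫⁻ x, ENNReal.ofReal (ρ x) ∂μ = 1 := by
    have : ν Set.univ = 1 := measure_univ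
    rw [hν, withDensity_apply _ MeasurableSet.univ, Measure.restrict_univ] at this
    exact this
  -- integral of truncation under any probability measure
  have hA : ∀ (m : Measure Ω) [IsProbabilityMeasure m], ∀ R : ℝ, 0 ≤ R →
      ∫⁻ x, ENNReal.ofReal (R - min R (g x)) ∂m
        = ENNReal.ofReal R - ∫⁻ x, ENNReal.ofReal (min R (g x)) ∂m := by
    intro m _ R hR
    have hmin0 : ∀ x, (0:ℝ) ≤ min R (g x) := fun x => le_min hR (hg0 x)
    have hmeas : Measurable fun x => ENNReal.ofReal (min R (g x)) :=
      (measurable_const.min hgmeas).ennreal_ofReal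
    have hle : (fun x => ENNReal.ofReal (min R (g x))) ≤ᵐ[m] fun _ => ENNReal.ofReal R :=
      Filter.Eventually.of_forall fun x => ENNReal.ofReal_le_ofReal (min_le_left _ _)
    have hfin : ∫⁻ x, ENNReal.ofReal (min R (g x)) ∂m ≠ ⊤ := by
      refine ne_top_of_le_ne_top ?_ (lintegral_mono fun x => ENNReal.ofReal_le_ofReal (min_le_left _ _))
      simp [lintegral_const]
    have := lintegral_sub hmeas hfin hle (μ := m)
    simp only [lintegral_const, measure_univ, mul_one] at this
    rw [← this]
    congr 1
    ext x
    exact ENNReal.ofReal_sub R (hmin0 x)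
  -- key: for each R ≥ 0, ν(min R g) ≤ μ(min R g)
  have key : ∀ R : ℝ, 0 ≤ R →
      ∫⁻ x, ENNReal.ofReal (min R (g x)) ∂ν ≤ ∫⁻ x, ENNReal.ofReal (min R (g x)) ∂μ := by
    intro R hR
    set f : Ω → ℝ := fun x => R - min R (g x) with hf
    have hf0 : ∀ x, 0 ≤ f x := fun x => sub_nonneg.2 (min_le_left _ _)
    have hfmeas : Measurable f := measurable_const.sub (measurable_const.min hgmeas)
    have hfsym : ∀ x, f (-x) = f x := fun x => by simp [hf, hgsym]
    have hfqc : ∀ r : ℝ, Convex ℝ {x | r ≤ f x} := by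
      intro r
      have hset : {x | r ≤ f x} = {x | min R (g x) ≤ R - r} := by
        ext x; simp only [Set.mem_setOf_eq, hf]; constructor <;> intro h <;> linarith
      rw [hset]
      by_cases hc : R ≤ R - r
      · have : {x | min R (g x) ≤ R - r} = Set.univ := by
          ext x; simp only [Set.mem_setOf_eq, Set.mem_univ, iff_true]
          exact le_trans (min_le_left _ _) hc
        rw [this]; exact convex_univ
      · push_neg at hc
        have : {x | min R (g x) ≤ R - r} = {x | g x ≤ R - r} := by
          ext x; simp only [Set.mem_setOf_eq]
          constructor
          · intro h
            rcases min_le_iff.mp h with h' | h'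
            · linarith
            · exact h'
          · intro h; exact le_trans (min_le_right _ _) h
        rw [this]
        have := hgconv.convex_le (R - r)
        simpa using this
    have hgci := hGCI f ρ hfmeas hρmeas hf0 hρ0 hfsym hρsym hfqc hρqc
    rw [hρdens, mul_one] at hgci
    have hrhs : ∫⁻ x, ENNReal.ofReal (f x * ρ x) ∂μ = ∫⁻ x, ENNReal.ofReal (f x) ∂ν := by
      rw [hν, lintegral_withDensity_eq_lintegral_mul _ hρmeas.ennreal_ofReal
        hfmeas.ennreal_ofReal]
      congr 1; ext x
      simp only [Pi.mul_apply]
      rw [ENNReal.ofReal_mul (hf0 x), mul_comm]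
    rw [hrhs] at hgci
    -- now: μ(f) ≤ ν(f), i.e. ofReal R - I_μ ≤ ofReal R - I_ν
    rw [hA μ R hR, hA ν R hR] at hgci
    set Iμ := ∫⁻ x, ENNReal.ofReal (min R (g x)) ∂μ
    set Iν := ∫⁻ x, ENNReal.ofReal (min R (g x)) ∂ν
    have hIν_le : Iν ≤ ENNReal.ofReal R := by
      refine le_trans (lintegral_mono fun x => ENNReal.ofReal_le_ofReal (min_le_left _ _)) ?_
      simp [lintegral_const]
    have : Iν = ENNReal.ofReal R - (ENNReal.ofReal R - Iν) :=
      (ENNReal.sub_sub_cancel ENNReal.ofReal_ne_top hIν_le).symm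
    rw [this]
    calc ENNReal.ofReal R - (ENNReal.ofReal R - Iν)
        ≤ ENNReal.ofReal R - (ENNReal.ofReal R - Iμ) := tsub_le_tsub_left hgci _
      _ = Iμ := ENNReal.sub_sub_cancel ENNReal.ofReal_ne_top
            (le_trans (lintegral_mono fun x => ENNReal.ofReal_le_ofReal (min_le_left _ _))
              (by simp [lintegral_const]))
  -- monotone convergence
  have hmono : Monotone fun (n : ℕ) => fun x => ENNReal.ofReal (min (n : ℝ) (g x)) := by
    intro a b hab x
    exact ENNReal.ofReal_le_ofReal (min_le_min (by exact_mod_cast hab) le_rfl)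
  have hsup : ∀ x, (⨆ n : ℕ, ENNReal.ofReal (min (n : ℝ) (g x))) = ENNReal.ofReal (g x) := by
    intro x
    apply le_antisymm
    · exact iSup_le fun n => ENNReal.ofReal_le_ofReal (min_le_right _ _)
    · have h1 : min (↑⌈g x⌉₊ : ℝ) (g x) = g x := min_eq_right (Nat.le_ceil _)
      calc ENNReal.ofReal (g x) = ENNReal.ofReal (min (↑⌈g x⌉₊ : ℝ) (g x)) := by rw [h1]
        _ ≤ ⨆ n : ℕ, ENNReal.ofReal (min (n : ℝ) (g x)) := le_iSup
            (fun n : ℕ => ENNReal.ofReal (min (n : ℝ) (g x))) ⌈g x⌉₊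
  calc ∫⁻ x, ENNReal.ofReal (g x) ∂ν
      = ∫⁻ x, ⨆ n : ℕ, ENNReal.ofReal (min (n : ℝ) (g x)) ∂ν := by
        congr 1; ext x; rw [hsup x]
    _ = ⨆ n : ℕ, ∫⁻ x, ENNReal.ofReal (min (n : ℝ) (g x)) ∂ν :=
        lintegral_iSup (fun n => (measurable_const.min hgmeas).ennreal_ofReal) hmono
    _ ≤ ∫⁻ x, ENNReal.ofReal (g x) ∂μ := by
        refine iSup_le fun n => le_trans (key n (Nat.cast_nonneg n)) ?_
        exact lintegral_mono fun x => ENNReal.ofReal_le_ofReal (min_le_right _ _)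
end

section
/- With the weights w(γ) = δ^{|M_0(γ)|}(1−δ)^{|M_1(γ)|} · Ψ_γ(e^g) / μ^{⊗T}(e^g) arising from reweighting the product decomposition by e^g, if for every coordinate i the single-coordinate-improved quotient satisfies (μ ⊗ … ⊗ ν ⊗ … ⊗ μ)(e^g) / μ^{⊗T}(e^g) ≥ 1 (with ν in position i), then Σ_γ w(γ)|M_1(γ)| ≥ T(1−δ). -/
/-!
Expanding each factor `μ = (1-δ)ν + δν̄` of `μ^{⊗T}` writes the product as a mixture, over
`γ : Fin T → Bool`, of the products with `ν` in the slots where `γ` is true and `ν̄` elsewhere.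
Doing the same with `ν` in slot `i` gives
`∑_{γ i} w(γ) = (1-δ) · (μ ⊗ ⋯ ⊗ ν ⊗ ⋯ ⊗ μ)(e^g) / μ^{⊗T}(e^g) ≥ 1-δ`, and summing over `i`
counts every `γ` exactly `|M₁(γ)|` times.
-/

open MeasureTheory Finset
open scoped ENNReal

lemma Finset.sum_mul_card_filter {α ι R : Type*} [Fintype ι] [NonAssocSemiring R]
    (s : Finset α) (p : α → ι → Prop) [∀ a i, Decidable (p a i)] (f : α → R) :
    ∑ a ∈ s, f a * #{i | p a i} = ∑ i, ∑ a ∈ s with p a i, f a := by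
  simp_rw [natCast_card_filter, mul_sum, mul_ite, mul_one, mul_zero, sum_filter]
  exact sum_comm

lemma Fintype.prod_bool_ite_eq_pow_mul_pow {ι M : Type*} [Fintype ι] [CommMonoid M]
    (γ : ι → Bool) (a b : M) :
    ∏ j, (if γ j then a else b) = b ^ #{j | γ j = false} * a ^ #{j | γ j = true} := by
  rw [prod_ite, prod_const, prod_const, mul_comm]
  simp

namespace MeasureTheory

variable {ι Ω : Type*} [Fintype ι] [DecidableEq ι] [MeasurableSpace Ω]

theorem Measure.pi_sum_smul {κ : Type*} [Fintype κ] (c : ι → κ → ℝ≥0∞) (hc : ∀ j k, c j k ≠ ∞)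
    (ρ : ι → κ → Measure Ω) [∀ j k, IsFiniteMeasure (ρ j k)] :
    Measure.pi (fun j => ∑ k, c j k • ρ j k) =
      ∑ γ : ι → κ, (∏ j, c j (γ j)) • Measure.pi (fun j => ρ j (γ j)) := by
  have (j : ι) (k : κ) : IsFiniteMeasure (c j k • ρ j k) := (ρ j k).smul_finite (hc j k)
  refine pi_eq fun s _ => ?_
  simp only [coe_finsetSum, Finset.sum_apply, smul_apply, smul_eq_mul, pi_pi,
    ← prod_mul_distrib]
  exact (Fintype.prod_sum fun j k => c j k * ρ j k (s j)).symm

theorem mul_lintegral_pi_update_eq_sum {μ ν ν' : Measure Ω} [IsFiniteMeasure ν]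
    [IsFiniteMeasure ν'] {a b : ℝ≥0∞} (ha : a ≠ ∞) (hb : b ≠ ∞) (hμ : μ = a • ν + b • ν')
    (F : (ι → Ω) → ℝ≥0∞) (i : ι) :
    a * ∫⁻ x, F x ∂Measure.pi (fun j => if j = i then ν else μ) =
      ∑ γ : ι → Bool with γ i = true,
        b ^ #{j | γ j = false} * a ^ #{j | γ j = true} *
          ∫⁻ x, F x ∂Measure.pi (fun j => if γ j then ν else ν') := by
  -- Slot `i` carries `ν = 1 • ν + 0 • ν'`; the outer factor `a` restores the weight of `γ i`.
  let c : ι → Bool → ℝ≥0∞ := fun j k =>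
    if j = i then (if k then 1 else 0) else (if k then a else b)
  have hslot : (fun j => if j = i then ν else μ) =
      fun j => ∑ k, c j k • (fun k : Bool => if k then ν else ν') k := by
    ext1 j
    by_cases hj : j = i <;> simp [c, hj, hμ]
  have hweight (γ : ι → Bool) : a * ∏ j, c j (γ j) =
      if γ i then ∏ j, (if γ j then a else b) else 0 := by
    rw [← mul_prod_erase univ _ (mem_univ i), ← mul_prod_erase univ _ (mem_univ i)]
    have hrest : ∏ j ∈ univ.erase i, c j (γ j) = ∏ j ∈ univ.erase i, (if γ j then a else b) :=
      prod_congr rfl fun j hj => by simp [c, ne_of_mem_erase hj]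
    cases γ i <;> simp [c, hrest]
  have (k : Bool) : IsFiniteMeasure (if k then ν else ν') := by
    cases k <;> assumption
  rw [hslot, Measure.pi_sum_smul c (fun j k => by unfold c; split_ifs <;> simp [ha, hb]),
    lintegral_finsetSum_measure, mul_sum, sum_filter]
  refine Finset.sum_congr rfl fun γ _ => ?_
  rw [lintegral_smul_measure, smul_eq_mul, ← mul_assoc, hweight,
    Fintype.prod_bool_ite_eq_pow_mul_pow]
  split_ifs <;> simp

end MeasureTheory

theorem stmt_14_general {Ω : Type*} [MeasurableSpace Ω]
    (μ ν νbar : Measure Ω)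
    [IsProbabilityMeasure ν] [IsProbabilityMeasure νbar]
    (δ : ℝ)
    (hmix : μ = ENNReal.ofReal (1 - δ) • ν + ENNReal.ofReal δ • νbar)
    (T : ℕ) (g : (Fin T → Ω) → ℝ)
    (hpos : 0 < ∫⁻ x, ENNReal.ofReal (Real.exp (g x)) ∂(Measure.pi fun _ : Fin T => μ))
    (hfin : (∫⁻ x, ENNReal.ofReal (Real.exp (g x)) ∂(Measure.pi fun _ : Fin T => μ)) < ⊤)
    (hGCI : ∀ i : Fin T,
      (∫⁻ x, ENNReal.ofReal (Real.exp (g x)) ∂(Measure.pi fun _ : Fin T => μ)) ≤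
        ∫⁻ x, ENNReal.ofReal (Real.exp (g x))
          ∂(Measure.pi fun j : Fin T => if j = i then ν else μ)) :
    ENNReal.ofReal ((T : ℝ) * (1 - δ)) ≤
      ∑ γ : Fin T → Bool,
        (ENNReal.ofReal δ ^ (Finset.univ.filter (fun i => γ i = false)).card *
            ENNReal.ofReal (1 - δ) ^ (Finset.univ.filter (fun i => γ i = true)).card *
            (∫⁻ x, ENNReal.ofReal (Real.exp (g x))
              ∂(Measure.pi fun i : Fin T => if γ i then ν else νbar)) /
            (∫⁻ x, ENNReal.ofReal (Real.exp (g x)) ∂(Measure.pi fun _ : Fin T => μ))) *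
          ((Finset.univ.filter (fun i => γ i = true)).card : ENNReal) := by
  set Z := ∫⁻ x, ENNReal.ofReal (Real.exp (g x)) ∂(Measure.pi fun _ : Fin T => μ)
  have hT : ENNReal.ofReal ((T : ℝ) * (1 - δ)) = ∑ _i : Fin T, ENNReal.ofReal (1 - δ) := by
    simp [ENNReal.ofReal_mul (Nat.cast_nonneg T)]
  rw [sum_mul_card_filter, hT]
  refine sum_le_sum fun i _ => ?_
  calc ENNReal.ofReal (1 - δ) = ENNReal.ofReal (1 - δ) * Z / Z :=
        (ENNReal.mul_div_cancel_right hpos.ne' hfin.ne).symm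
    _ ≤ ENNReal.ofReal (1 - δ) * (∫⁻ x, ENNReal.ofReal (Real.exp (g x))
          ∂(Measure.pi fun j : Fin T => if j = i then ν else μ)) / Z := by
        gcongr
        exact hGCI i
    _ = _ := by
        rw [mul_lintegral_pi_update_eq_sum ENNReal.ofReal_ne_top ENNReal.ofReal_ne_top hmix]
        simp only [div_eq_mul_inv, sum_mul]

/-- With the weights
`w(γ) = δ^{|M₀(γ)|}(1-δ)^{|M₁(γ)|} Ψ_γ(e^g)/μ^{⊗T}(e^g)` from reweighting the
product decomposition by `e^g`, if for every coordinate `i` the quotient with `ν`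
substituted in position `i` satisfies
`(μ ⊗ ⋯ ⊗ ν ⊗ ⋯ ⊗ μ)(e^g)/μ^{⊗T}(e^g) ≥ 1`, then
`Σ_γ w(γ)|M₁(γ)| ≥ T(1-δ)`. -/
theorem stmt_14 {Ω : Type*} [MeasurableSpace Ω]
    (μ ν νbar : Measure Ω) [IsProbabilityMeasure μ]
    [IsProbabilityMeasure ν] [IsProbabilityMeasure νbar]
    (δ : ℝ) (hδ0 : 0 ≤ δ) (hδ1 : δ ≤ 1)
    (hmix : μ = ENNReal.ofReal (1 - δ) • ν + ENNReal.ofReal δ • νbar)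
    (T : ℕ) (g : (Fin T → Ω) → ℝ) (hgmeas : Measurable g)
    (hgbd : ∃ M : ℝ, ∀ x, g x ≤ M)
    (hpos : 0 < ∫⁻ x, ENNReal.ofReal (Real.exp (g x)) ∂(Measure.pi fun _ : Fin T => μ))
    (hfin : (∫⁻ x, ENNReal.ofReal (Real.exp (g x)) ∂(Measure.pi fun _ : Fin T => μ)) < ⊤)
    (hGCI : ∀ i : Fin T,
      (∫⁻ x, ENNReal.ofReal (Real.exp (g x)) ∂(Measure.pi fun _ : Fin T => μ)) ≤
        ∫⁻ x, ENNReal.ofReal (Real.exp (g x))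
          ∂(Measure.pi fun j : Fin T => if j = i then ν else μ)) :
    ENNReal.ofReal ((T : ℝ) * (1 - δ)) ≤
      ∑ γ : Fin T → Bool,
        (ENNReal.ofReal δ ^ (Finset.univ.filter (fun i => γ i = false)).card *
            ENNReal.ofReal (1 - δ) ^ (Finset.univ.filter (fun i => γ i = true)).card *
            (∫⁻ x, ENNReal.ofReal (Real.exp (g x))
              ∂(Measure.pi fun i : Fin T => if γ i then ν else νbar)) /
            (∫⁻ x, ENNReal.ofReal (Real.exp (g x)) ∂(Measure.pi fun _ : Fin T => μ))) *
          ((Finset.univ.filter (fun i => γ i = true)).card : ENNReal) :=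
  stmt_14_general μ ν νbar δ hmix T g hpos hfin hGCI
end
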